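/- arXiv:2101.05644 — 2 statements merged into one kernel-verified Lean document; each statement's English description precedes it below -/
import Mathlib

section
/- For fixed γ ≥ 1, the function β ↦ β^{-1}(γ−1)(e^β − 1 − β) + e^β − 1 is strictly increasing on (0, ∞). -/
theorem stmt_7 (γ : ℝ) (hγ : 1 ≤ γ) :
    StrictMonoOn (fun β : ℝ => β⁻¹ * (γ - 1) * (Real.exp β - 1 - β) + Real.exp β - 1)
      (Set.Ioi (0 : ℝ)) := by
  have hc : 0 ≤ γ - 1 := by linarith
  apply strictMonoOn_of_deriv_pos (convex_Ioi 0)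
  · exact ((((continuousOn_id.inv₀ (fun x hx => ne_of_gt hx)).mul continuousOn_const).mul
      (((Real.continuous_exp.continuousOn).sub continuousOn_const).sub continuousOn_id)).add
      (Real.continuous_exp.continuousOn)).sub continuousOn_const
  · intro x hx
    rw [interior_Ioi] at hx
    have hx0 : (0:ℝ) < x := hx
    have hne : x ≠ 0 := ne_of_gt hx0
    have h1 : HasDerivAt (fun β : ℝ => β⁻¹ * (γ - 1)) (-(x ^ 2)⁻¹ * (γ - 1)) x :=
      (hasDerivAt_inv hne).mul_const _
    have h2 : HasDerivAt (fun β : ℝ => Real.exp β - 1 - β) (Real.exp x - 1) x := by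
      have := ((Real.hasDerivAt_exp x).sub_const 1).sub (hasDerivAt_id x)
      exact this
    have h3 := h1.mul h2
    have h4 := (h3.add (Real.hasDerivAt_exp x)).sub_const 1
    rw [show deriv (fun β : ℝ => β⁻¹ * (γ - 1) * (Real.exp β - 1 - β) + Real.exp β - 1) x = _ from h4.deriv]
    have hE : 0 < Real.exp x := Real.exp_pos x
    have key : 0 ≤ x * Real.exp x - Real.exp x + 1 := by
      have h5 := Real.add_one_le_exp (-x)
      have h6 : Real.exp (-x) * Real.exp x = 1 := by
        rw [← Real.exp_add]; simp
      nlinarith [hE]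
    have ha : (0:ℝ) < (x ^ 2)⁻¹ := by positivity
    have hb : x⁻¹ = x * (x ^ 2)⁻¹ := by
      field_simp
    rw [hb]
    nlinarith [mul_nonneg (mul_nonneg ha.le hc) key, hE]
end

section
/- The map (ω, β, γ, α) ↦ (β^{-1}(e^β−1)ω, β^{-1}(γ−1)(e^β−1−β) + e^β−1, γ, α(β^{-2}(γ−1)(e^β−1−β) + β^{-1}(e^β−1))) is injective on the domain {(ω,β,γ,α) : ω > 0, β > 0, γ ≥ 1, α ∈ ℝ}. -/
open Real

lemma key_slope {a b : ℝ} (ha : 0 < a) (hab : a < b) :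
    a⁻¹ * (Real.exp a - 1) < b⁻¹ * (Real.exp b - 1) := by
  have h := strictConvexOn_exp.secant_strict_mono (a := 0) (x := a) (y := b)
    (Set.mem_univ _) (Set.mem_univ _) (Set.mem_univ _) ha.ne' (ha.trans hab).ne' hab
  simp only [Real.exp_zero, sub_zero] at h
  rw [div_eq_inv_mul, div_eq_inv_mul] at h
  exact h

theorem stmt_8 :
    Set.InjOn
      (fun p : ℝ × ℝ × ℝ × ℝ =>
        ((p.2.1)⁻¹ * (Real.exp p.2.1 - 1) * p.1,
         (p.2.1)⁻¹ * (p.2.2.1 - 1) * (Real.exp p.2.1 - 1 - p.2.1) + Real.exp p.2.1 - 1,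
         p.2.2.1,
         p.2.2.2 * ((p.2.1) ^ (-2 : ℤ) * (p.2.2.1 - 1) * (Real.exp p.2.1 - 1 - p.2.1)
           + (p.2.1)⁻¹ * (Real.exp p.2.1 - 1))))
      {p : ℝ × ℝ × ℝ × ℝ | 0 < p.1 ∧ 0 < p.2.1 ∧ 1 ≤ p.2.2.1} := by
  rintro ⟨w1, b1, g1, a1⟩ ⟨hw1, hb1, hg1⟩ ⟨w2, b2, g2, a2⟩ ⟨hw2, hb2, hg2⟩ h
  simp only [Prod.mk.injEq] at h
  dsimp only at hw1 hb1 hg1 hw2 hb2 hg2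
  obtain ⟨h1, h2, h3, h4⟩ := h
  subst h3
  have hg : (0:ℝ) ≤ g1 - 1 := sub_nonneg.2 hg1
  -- β₁ = β₂
  have hbb : b1 = b2 := by
    have main : ∀ x y : ℝ, 0 < x → x < y →
        x⁻¹ * (g1 - 1) * (Real.exp x - 1 - x) + Real.exp x - 1
          < y⁻¹ * (g1 - 1) * (Real.exp y - 1 - y) + Real.exp y - 1 := by
      intro x y hx hxy
      have hy : 0 < y := hx.trans hxy
      have hk := key_slope hx hxy
      have he : Real.exp x < Real.exp y := Real.exp_lt_exp.2 hxy
      have e1 : x⁻¹ * (g1 - 1) * (Real.exp x - 1 - x)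
          = (g1 - 1) * (x⁻¹ * (Real.exp x - 1) - 1) := by
        field_simp
      have e2 : y⁻¹ * (g1 - 1) * (Real.exp y - 1 - y)
          = (g1 - 1) * (y⁻¹ * (Real.exp y - 1) - 1) := by
        field_simp
      rw [e1, e2]
      have := mul_le_mul_of_nonneg_left (le_of_lt hk) hg
      nlinarith
    by_contra hne
    rcases lt_or_gt_of_ne hne with hlt | hlt
    · exact absurd h2 (ne_of_lt (main b1 b2 hb1 hlt))
    · exact absurd h2.symm (ne_of_lt (main b2 b1 hb2 hlt))
  subst hbb
  have hexp : 1 < Real.exp b1 := Real.one_lt_exp_iff.2 hb1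
  have hcoef : 0 < (b1)⁻¹ * (Real.exp b1 - 1) :=
    mul_pos (inv_pos.2 hb1) (by linarith)
  have hww : w1 = w2 := mul_left_cancel₀ hcoef.ne' h1
  subst hww
  have hconv : 0 ≤ Real.exp b1 - 1 - b1 := by
    nlinarith [Real.add_one_le_exp b1]
  have hc4 : 0 < (b1) ^ (-2 : ℤ) * (g1 - 1) * (Real.exp b1 - 1 - b1)
      + (b1)⁻¹ * (Real.exp b1 - 1) := by
    have hp : (0:ℝ) < (b1) ^ (-2 : ℤ) := by positivity
    nlinarith [mul_nonneg (mul_nonneg hp.le hg) hconv]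
  have haa : a1 = a2 := mul_right_cancel₀ hc4.ne' h4
  subst haa
  rfl
end
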